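/- Let Ω ⊂ ℝ^N be open and bounded, p ∈ [2,N), let u_n → u_0 pointwise a.e. in Ω and ∇u_n ⇀ ∇u_0 weakly in L^p(Ω), let 𝒜_+ ∈ L^∞(Ω) satisfy λ ≤ 𝒜_+ ≤ Λ. Then ∫_{Ω ∩ {u_0 > 0}} 𝒜_+(x)|∇u_0|^p dx ≤ liminf_{n→∞} ∫_{Ω ∩ {u_n > 0}} 𝒜_+(x)|∇u_n|^p dx. -/

import Mathlib

open MeasureTheory Metric Set Filter Topology
open scoped ENNReal RealInnerProductSpace

noncomputable section

abbrev Euc (N : ℕ) := EuclideanSpace ℝ (Fin N)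

/-- `Du` is a weak gradient of `u` on `Ω`. -/
def IsWeakGradOn {N : ℕ} (Ω : Set (Euc N)) (u : Euc N → ℝ) (Du : Euc N → Euc N) : Prop :=
  ∀ φ : Euc N → ℝ, ContDiff ℝ 1 φ → HasCompactSupport φ → tsupport φ ⊆ Ω →
    ∫ x in Ω, u x • gradient φ x = - ∫ x in Ω, φ x • Du x

/-- `u ∈ W^{1,p}(Ω)` with weak gradient `Du`. -/
def MemW1p {N : ℕ} (p : ℝ) (Ω : Set (Euc N)) (u : Euc N → ℝ) (Du : Euc N → Euc N) : Prop :=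
  MemLp u (ENNReal.ofReal p) (volume.restrict Ω) ∧
  MemLp Du (ENNReal.ofReal p) (volume.restrict Ω) ∧
  IsWeakGradOn Ω u Du

/-- `u ∈ W^{1,p}_0(Ω)`: the extension of `u` by zero is weakly differentiable on all of `ℝ^N`,
with weak gradient the extension of `Du` by zero. -/
def MemW1pZero {N : ℕ} (p : ℝ) (Ω : Set (Euc N)) (u : Euc N → ℝ) (Du : Euc N → Euc N) : Prop :=
  MemW1p p Ω u Du ∧ IsWeakGradOn univ (Ω.indicator u) (Ω.indicator Du)

/-- The transmission functional `F(v) = ∫_Ω 𝒜(x,v)|∇v|^p − f(x,v) v + γ(x,v) dx`. -/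
def Fval {N : ℕ} (p : ℝ) (Ω : Set (Euc N)) (Ap Am fp fm gp gm : Euc N → ℝ)
    (u : Euc N → ℝ) (Du : Euc N → Euc N) : ℝ :=
  ∫ x in Ω, ((if 0 < u x then Ap x else Am x) * ‖Du x‖ ^ p
    - (if 0 < u x then fp x else fm x) * u x
    + (if 0 < u x then gp x else gm x))

/-- Membership in `W^{1,p}_φ(Ω)`. -/
def AdmissibleBd {N : ℕ} (p : ℝ) (Ω : Set (Euc N)) (φ : Euc N → ℝ) (Dφ : Euc N → Euc N)
    (u : Euc N → ℝ) (Du : Euc N → Euc N) : Prop :=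
  MemW1p p Ω u Du ∧ MemW1pZero p Ω (u - φ) (Du - Dφ)

/-- Density ratio of a set `E` at `x` at scale `r`. -/
def densRatio {N : ℕ} (E : Set (Euc N)) (x : Euc N) (r : ℝ) : ℝ≥0∞ :=
  volume (E ∩ ball x r) / volume (ball x r)

/-- The essential (measure-theoretic) boundary of `E`: points at which `E` has neither
density one nor density zero. -/
def essBoundary {N : ℕ} (E : Set (Euc N)) : Set (Euc N) :=
  {x | ¬ Tendsto (densRatio E x) (𝓝[>] 0) (𝓝 1) ∧ ¬ Tendsto (densRatio E x) (𝓝[>] 0) (𝓝 0)}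

/-- Perimeter of `E` relative to `Ω`, as the `ℋ^{N-1}` measure of the essential boundary. -/
def perim {N : ℕ} (Ω E : Set (Euc N)) : ℝ≥0∞ :=
  μH[(N : ℝ) - 1] (essBoundary E ∩ Ω)

/-!
The sets `B m = {u₀ > 0} ∩ ⋂ n ≥ m, {u n > 0}` increase and exhaust `{u₀ > 0}` up to a null set
(a.e. convergence suffices, no Egorov argument is needed), and on `B m` every `u n` with `n ≥ m`
is positive. On a fixed `B m` the weighted energy `∫ 𝒜₊ ‖∇v‖ ^ p` is convex in `∇v`,
hence weakly lower semicontinuous: tested against `𝒜₊ 1_{B m} |∇u₀| ^ (p - 2) ∇u₀`, the tangent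
inequality of `‖·‖ ^ p` turns weak convergence into the lower bound. Monotone convergence in `m`
finishes. Since `liminf` of a sequence unbounded above is a junk value in `ℝ`, the energies must
also be bounded, which follows from weak convergence by Banach–Steinhaus.
-/

section DualityMap

variable {E : Type*} [NormedAddCommGroup E] [InnerProductSpace ℝ E]

def dualityMap (p : ℝ) (v : E) : E := ‖v‖ ^ (p - 2) • v

theorem norm_dualityMap {p : ℝ} (hp : p ≠ 1) (v : E) : ‖dualityMap p v‖ = ‖v‖ ^ (p - 1) := by
  rw [dualityMap, norm_smul, Real.norm_of_nonneg (by positivity),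
    ← Real.rpow_add_one' (norm_nonneg v) (by contrapose! hp; linarith)]
  ring_nf

theorem inner_self_dualityMap {p : ℝ} (hp : p ≠ 0) (v : E) : ⟪v, dualityMap p v⟫ = ‖v‖ ^ p := by
  rw [dualityMap, real_inner_smul_right, real_inner_self_eq_norm_sq,
    ← Real.rpow_add_natCast' (norm_nonneg v) (by push_cast; contrapose! hp; linarith)]
  push_cast
  ring_nf

theorem mul_rpow_sub_one_mul_le {a b p : ℝ} (ha : 0 ≤ a) (hb : 0 ≤ b) (hp : 1 < p) :
    p * (a ^ (p - 1) * b) ≤ (p - 1) * a ^ p + b ^ p := by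
  have hpq := (Real.HolderConjugate.conjExponent hp).symm
  have hyoung := Real.young_inequality_of_nonneg (Real.rpow_nonneg ha (p - 1)) hb hpq
  rw [← Real.rpow_mul ha, Real.conjExponent, mul_div_cancel₀ _ (by linarith)] at hyoung
  have hp0 : 0 < p := by linarith
  calc p * (a ^ (p - 1) * b) ≤ p * (a ^ p / (p / (p - 1)) + b ^ p / p) := by gcongr
    _ = (p - 1) * a ^ p + b ^ p := by field_simp

/-- Convexity of `‖·‖ ^ p`: the graph lies above its tangent plane at `η`, whose slope is
`p • dualityMap p η`. -/
theorem norm_rpow_add_mul_inner_dualityMap_le {p : ℝ} (hp : 1 < p) (η ξ : E) :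
    ‖η‖ ^ p + p * ⟪ξ - η, dualityMap p η⟫ ≤ ‖ξ‖ ^ p := by
  have hinner : ⟪ξ, dualityMap p η⟫ ≤ ‖η‖ ^ (p - 1) * ‖ξ‖ := by
    rw [mul_comm, ← norm_dualityMap hp.ne']
    exact real_inner_le_norm _ _
  have hyoung := mul_rpow_sub_one_mul_le (norm_nonneg η) (norm_nonneg ξ) hp
  rw [inner_sub_left, inner_self_dualityMap (by linarith)]
  nlinarith

end DualityMap

section Lp

variable {α E : Type*} [MeasurableSpace α] {μ : Measure α} [NormedAddCommGroup E] {p q : ℝ}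

theorem integrable_norm_rpow_of_memLp (hp : 0 < p) {f : α → E} (hf : MemLp f (.ofReal p) μ) :
    Integrable (fun x => ‖f x‖ ^ p) μ := by
  simpa [ENNReal.toReal_ofReal hp.le] using
    hf.integrable_norm_rpow (by simpa using hp) ENNReal.ofReal_ne_top

theorem integrable_mul_norm_rpow {w : α → ℝ} {Λ : ℝ} (hp : 0 < p)
    (hwm : AEStronglyMeasurable w μ) (hw : ∀ᵐ x ∂μ, 0 ≤ w x ∧ w x ≤ Λ) {v : α → E}
    (hv : MemLp v (.ofReal p) μ) :
    Integrable (fun x => w x * ‖v x‖ ^ p) μ :=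
  (integrable_norm_rpow_of_memLp hp hv).bdd_mul hwm <|
    hw.mono fun _ hx => (Real.norm_of_nonneg hx.1).trans_le hx.2

variable [InnerProductSpace ℝ E]

theorem memLp_dualityMap (hpq : p.HolderConjugate q) {f : α → E}
    (hf : MemLp f (.ofReal p) μ) : MemLp (fun x => dualityMap p (f x)) (.ofReal q) μ := by
  have hnorm := hf.norm_rpow_div (.ofReal (p - 1))
  rw [ENNReal.toReal_ofReal hpq.sub_one_pos.le, ← ENNReal.ofReal_div_of_pos hpq.sub_one_pos,
    ← hpq.conjugate_eq] at hnorm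
  refine hnorm.of_le (((hf.1.norm.aemeasurable.pow_const _).aestronglyMeasurable).smul hf.1)
    (.of_forall fun x => ?_)
  rw [norm_dualityMap hpq.lt.ne', Real.norm_of_nonneg (by positivity)]

theorem integrable_inner_of_memLp (hpq : p.HolderConjugate q) {f g : α → E}
    (hf : MemLp f (.ofReal p) μ) (hg : MemLp g (.ofReal q) μ) :
    Integrable (fun x => ⟪f x, g x⟫) μ := by
  have := hpq.ennrealOfReal
  exact memLp_one_iff_integrable.1 ((innerSL ℝ).memLp_of_bilin 1 hf hg)

theorem le_rpow_of_le_mul_rpow_inv (hpq : p.HolderConjugate q) {J C : ℝ} (hJ : 0 ≤ J)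
    (hC : 0 ≤ C) (h : J ≤ C * J ^ q⁻¹) : J ≤ C ^ p := by
  rcases hJ.eq_or_lt with rfl | hJ
  · positivity
  have hroot : J ^ p⁻¹ ≤ C := by
    refine le_of_mul_le_mul_right ?_ (Real.rpow_pos_of_pos hJ q⁻¹)
    rwa [← Real.rpow_add hJ, hpq.inv_add_inv_eq_one, Real.rpow_one]
  calc J = (J ^ p⁻¹) ^ p := by
        rw [← Real.rpow_mul hJ.le, inv_mul_cancel₀ hpq.ne_zero, Real.rpow_one]
    _ ≤ C ^ p := by gcongr; exact hpq.nonneg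

/-- Uniform boundedness principle: a sequence that converges weakly in `L^p` is bounded. -/
theorem exists_integral_norm_rpow_le_of_tendsto_integral_inner [CompleteSpace E]
    (hpq : p.HolderConjugate q) {f : ℕ → α → E} (hf : ∀ n, MemLp (f n) (.ofReal p) μ)
    (hweak : ∀ g, MemLp g (.ofReal q) μ →
      ∃ c, Tendsto (fun n => ∫ x, ⟪f n x, g x⟫ ∂μ) atTop (𝓝 c)) :
    ∃ C, ∀ n, ∫ x, ‖f n x‖ ^ p ∂μ ≤ C := by
  have := hpq.ennrealOfReal
  have : Fact (1 ≤ ENNReal.ofReal p) := ⟨by simpa using hpq.lt.le⟩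
  have : Fact (1 ≤ ENNReal.ofReal q) := ⟨by simpa using hpq.symm.lt.le⟩
  let T (n : ℕ) : Lp E (.ofReal q) μ →L[ℝ] ℝ := (innerSL ℝ).lpPairing μ _ _ ((hf n).toLp)
  have hT (n : ℕ) (g : Lp E (.ofReal q) μ) : T n g = ∫ x, ⟪f n x, g x⟫ ∂μ := by
    refine ((innerSL ℝ).lpPairing_eq_integral _ g).trans (integral_congr_ae ?_)
    filter_upwards [(hf n).coeFn_toLp] with x hx
    rw [hx, innerSL_apply_apply]
  obtain ⟨C, hC⟩ := banach_steinhaus (g := T) fun g => by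
    obtain ⟨c, hc⟩ := hweak g (Lp.memLp g)
    obtain ⟨C, hC⟩ := hc.norm.bddAbove_range
    exact ⟨C, fun n => by rw [hT]; exact hC ⟨n, rfl⟩⟩
  refine ⟨C ^ p, fun n => le_rpow_of_le_mul_rpow_inv hpq (integral_nonneg fun _ => by positivity)
    ((norm_nonneg _).trans (hC 0)) ?_⟩
  have hG := memLp_dualityMap hpq (hf n)
  have hGnorm : ‖hG.toLp‖ = (∫ x, ‖f n x‖ ^ p ∂μ) ^ q⁻¹ := by
    rw [Lp.norm_toLp, hG.eLpNorm_eq_integral_rpow_norm (by simpa using hpq.symm.pos)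
      ENNReal.ofReal_ne_top, ENNReal.toReal_ofReal (by positivity),
      ENNReal.toReal_ofReal hpq.symm.nonneg]
    congr 2 with x
    rw [norm_dualityMap hpq.lt.ne', ← Real.rpow_mul (norm_nonneg _), hpq.sub_one_mul_conj]
  calc ∫ x, ‖f n x‖ ^ p ∂μ = T n hG.toLp := by
        rw [hT]
        refine integral_congr_ae ?_
        filter_upwards [hG.coeFn_toLp] with x hx
        rw [hx, inner_self_dualityMap hpq.ne_zero]
    _ ≤ ‖T n‖ * ‖hG.toLp‖ := (le_abs_self _).trans ((T n).le_opNorm _)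
    _ ≤ C * (∫ x, ‖f n x‖ ^ p ∂μ) ^ q⁻¹ := by rw [hGnorm]; gcongr; exact hC n

end Lp

section EventuallyPositive

variable {α : Type*} [MeasurableSpace α] {μ : Measure α}

theorem integral_indicator_mul {s : Set α} (hs : NullMeasurableSet s μ) (w F : α → ℝ) :
    ∫ x, s.indicator w x * F x ∂μ = ∫ x in s, w x * F x ∂μ := by
  rw [← integral_indicator₀ hs]
  congr 1 with x
  exact (indicator_mul_left s w F).symm

theorem exists_monotone_eventually_subset_pos {u : ℕ → α → ℝ} {u₀ : α → ℝ}
    (hu : ∀ n, AEMeasurable (u n) μ) (hu₀ : AEMeasurable u₀ μ)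
    (h : ∀ᵐ x ∂μ, Tendsto (fun n => u n x) atTop (𝓝 (u₀ x))) :
    ∃ B : ℕ → Set α, (∀ m, NullMeasurableSet (B m) μ) ∧ Monotone B ∧
      (⋃ m, B m) =ᵐ[μ] {x | 0 < u₀ x} ∧ ∀ m, ∀ᶠ n in atTop, B m ⊆ {x | 0 < u n x} := by
  refine ⟨fun m => {x | 0 < u₀ x} ∩ ⋂ n ≥ m, {x | 0 < u n x}, fun m => ?_,
    fun m m' hm x hx => ?_, ?_, fun m => ?_⟩
  · exact (nullMeasurableSet_lt aemeasurable_const hu₀).inter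
      (.iInter fun n => .iInter fun _ => nullMeasurableSet_lt aemeasurable_const (hu n))
  · exact ⟨hx.1, mem_iInter₂.2 fun n hn => mem_iInter₂.1 hx.2 n (hm.trans hn)⟩
  · rw [eventuallyEq_set]
    filter_upwards [h] with x hx
    refine ⟨fun hB => (mem_iUnion.1 hB).choose_spec.1, fun h₀ => ?_⟩
    obtain ⟨m, hm⟩ := eventually_atTop.1 (hx.eventually (lt_mem_nhds h₀))
    exact mem_iUnion.2 ⟨m, h₀, mem_iInter₂.2 hm⟩
  · filter_upwards [eventually_ge_atTop m] with n hn x hx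
    exact mem_iInter₂.1 hx.2 n hn

end EventuallyPositive

section WeakLowerSemicontinuity

variable {α E : Type*} [MeasurableSpace α] {μ : Measure α}
  [NormedAddCommGroup E] [InnerProductSpace ℝ E] [CompleteSpace E] {p q : ℝ}
  {f : ℕ → α → E} {f₀ : α → E} {w : α → ℝ} {Λ : ℝ}

theorem isBoundedUnder_le_integral_mul_norm_rpow (hpq : p.HolderConjugate q) (hΛ : 0 ≤ Λ)
    (hw : ∀ᵐ x ∂μ, 0 ≤ w x ∧ w x ≤ Λ) (hf : ∀ n, MemLp (f n) (.ofReal p) μ)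
    (hweak : ∀ g, MemLp g (.ofReal q) μ →
      Tendsto (fun n => ∫ x, ⟪f n x, g x⟫ ∂μ) atTop (𝓝 (∫ x, ⟪f₀ x, g x⟫ ∂μ))) :
    IsBoundedUnder (· ≤ ·) atTop (fun n => ∫ x, w x * ‖f n x‖ ^ p ∂μ) := by
  obtain ⟨C, hC⟩ := exists_integral_norm_rpow_le_of_tendsto_integral_inner hpq hf
    fun g hg => ⟨_, hweak g hg⟩
  refine isBoundedUnder_of ⟨Λ * C, fun n => ?_⟩
  calc ∫ x, w x * ‖f n x‖ ^ p ∂μ ≤ ∫ x, Λ * ‖f n x‖ ^ p ∂μ := by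
        refine integral_mono_of_nonneg ?_
          ((integrable_norm_rpow_of_memLp hpq.pos (hf n)).const_mul Λ) ?_
        · filter_upwards [hw] with x hx using mul_nonneg hx.1 (by positivity)
        · filter_upwards [hw] with x hx using mul_le_mul_of_nonneg_right hx.2 (by positivity)
    _ ≤ Λ * C := by rw [integral_const_mul]; exact mul_le_mul_of_nonneg_left (hC n) hΛ

theorem integral_mul_norm_rpow_le_liminf (hpq : p.HolderConjugate q) (hΛ : 0 ≤ Λ)
    (hwm : AEStronglyMeasurable w μ) (hw : ∀ᵐ x ∂μ, 0 ≤ w x ∧ w x ≤ Λ)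
    (hf : ∀ n, MemLp (f n) (.ofReal p) μ) (hf₀ : MemLp f₀ (.ofReal p) μ)
    (hweak : ∀ g, MemLp g (.ofReal q) μ →
      Tendsto (fun n => ∫ x, ⟪f n x, g x⟫ ∂μ) atTop (𝓝 (∫ x, ⟪f₀ x, g x⟫ ∂μ))) :
    ∫ x, w x * ‖f₀ x‖ ^ p ∂μ ≤ liminf (fun n => ∫ x, w x * ‖f n x‖ ^ p ∂μ) atTop := by
  have henergy {v : α → E} (hv : MemLp v (.ofReal p) μ) :
      Integrable (fun x => w x * ‖v x‖ ^ p) μ :=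
    integrable_mul_norm_rpow hpq.pos hwm hw hv
  set g : α → E := fun x => w x • dualityMap p (f₀ x)
  have hg : MemLp g (.ofReal q) μ := by
    refine (memLp_dualityMap hpq hf₀).of_le_mul (c := Λ) ?_ ?_
    · exact hwm.smul (memLp_dualityMap hpq hf₀).1
    · filter_upwards [hw] with x hx
      rw [norm_smul, Real.norm_of_nonneg hx.1]
      exact mul_le_mul_of_nonneg_right hx.2 (norm_nonneg _)
  set a : ℕ → ℝ := fun n => ∫ x, w x * ‖f₀ x‖ ^ p ∂μ +
    p * ((∫ x, ⟪f n x, g x⟫ ∂μ) - ∫ x, ⟪f₀ x, g x⟫ ∂μ)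
  have ha : Tendsto a atTop (𝓝 (∫ x, w x * ‖f₀ x‖ ^ p ∂μ)) := by
    have := (((hweak g hg).sub_const (∫ x, ⟪f₀ x, g x⟫ ∂μ)).const_mul p).const_add
      (∫ x, w x * ‖f₀ x‖ ^ p ∂μ)
    rwa [sub_self, mul_zero, add_zero] at this
  have ha_le (n : ℕ) : a n ≤ ∫ x, w x * ‖f n x‖ ^ p ∂μ := by
    have hinner {v : α → E} (hv : MemLp v (.ofReal p) μ) : Integrable (fun x => ⟪v x, g x⟫) μ :=
      integrable_inner_of_memLp hpq hv hg
    calc a n = ∫ x, (w x * ‖f₀ x‖ ^ p + p * ⟪f n x - f₀ x, g x⟫) ∂μ := by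
          have hdiff : Integrable (fun x => ⟪f n x, g x⟫ - ⟪f₀ x, g x⟫) μ :=
            (hinner (hf n)).sub (hinner hf₀)
          simp only [a, inner_sub_left]
          rw [integral_add (henergy hf₀) (hdiff.const_mul p),
            integral_const_mul, integral_sub (hinner (hf n)) (hinner hf₀)]
      _ ≤ ∫ x, w x * ‖f n x‖ ^ p ∂μ := by
          refine integral_mono_ae ((henergy hf₀).add
            ((integrable_inner_of_memLp hpq ((hf n).sub hf₀) hg).const_mul p)) (henergy (hf n)) ?_
          filter_upwards [hw] with x hx
          have := mul_le_mul_of_nonneg_left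
            (norm_rpow_add_mul_inner_dualityMap_le hpq.lt (f₀ x) (f n x)) hx.1
          simp only [g, real_inner_smul_right]
          linarith
  calc ∫ x, w x * ‖f₀ x‖ ^ p ∂μ = liminf a atTop := ha.liminf_eq.symm
    _ ≤ liminf (fun n => ∫ x, w x * ‖f n x‖ ^ p ∂μ) atTop :=
      liminf_le_liminf (.of_forall ha_le) ha.isBoundedUnder_ge
        (isBoundedUnder_le_integral_mul_norm_rpow hpq hΛ hw hf hweak).isCoboundedUnder_ge

theorem setIntegral_pos_mul_norm_rpow_le_liminf (hpq : p.HolderConjugate q) (hΛ : 0 ≤ Λ)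
    (hwm : AEStronglyMeasurable w μ) (hw : ∀ᵐ x ∂μ, 0 ≤ w x ∧ w x ≤ Λ)
    {u : ℕ → α → ℝ} {u₀ : α → ℝ} (hu : ∀ n, AEMeasurable (u n) μ) (hu₀ : AEMeasurable u₀ μ)
    (hae : ∀ᵐ x ∂μ, Tendsto (fun n => u n x) atTop (𝓝 (u₀ x)))
    (hf : ∀ n, MemLp (f n) (.ofReal p) μ) (hf₀ : MemLp f₀ (.ofReal p) μ)
    (hweak : ∀ g, MemLp g (.ofReal q) μ →
      Tendsto (fun n => ∫ x, ⟪f n x, g x⟫ ∂μ) atTop (𝓝 (∫ x, ⟪f₀ x, g x⟫ ∂μ))) :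
    ∫ x in {x | 0 < u₀ x}, w x * ‖f₀ x‖ ^ p ∂μ ≤
      liminf (fun n => ∫ x in {x | 0 < u n x}, w x * ‖f n x‖ ^ p ∂μ) atTop := by
  have henergy {v : α → E} (hv : MemLp v (.ofReal p) μ) :
      Integrable (fun x => w x * ‖v x‖ ^ p) μ :=
    integrable_mul_norm_rpow hpq.pos hwm hw hv
  have hnonneg (v : α → E) : 0 ≤ᵐ[μ] fun x => w x * ‖v x‖ ^ p :=
    hw.mono fun x hx => mul_nonneg hx.1 (by positivity)
  have hbdd : IsBoundedUnder (· ≤ ·) atTop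
      (fun n => ∫ x in {x | 0 < u n x}, w x * ‖f n x‖ ^ p ∂μ) :=
    (isBoundedUnder_le_integral_mul_norm_rpow hpq hΛ hw hf hweak).mono_le <| .of_forall
      fun n => setIntegral_le_integral (henergy (hf n)) (hnonneg _)
  obtain ⟨B, hBm, hBmono, hBunion, hBpos⟩ := exists_monotone_eventually_subset_pos hu hu₀ hae
  have hB (m : ℕ) : ∫ x in B m, w x * ‖f₀ x‖ ^ p ∂μ ≤
      liminf (fun n => ∫ x in {x | 0 < u n x}, w x * ‖f n x‖ ^ p ∂μ) atTop := by
    have hwB : ∀ᵐ x ∂μ, 0 ≤ (B m).indicator w x ∧ (B m).indicator w x ≤ Λ := by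
      filter_upwards [hw] with x hx
      by_cases hxB : x ∈ B m
      · simpa [hxB] using hx
      · simpa [hxB] using hΛ
    rw [← integral_indicator_mul (hBm m)]
    refine (integral_mul_norm_rpow_le_liminf hpq hΛ (hwm.indicator₀ (hBm m)) hwB hf hf₀
      hweak).trans (liminf_le_liminf ?_ ?_ hbdd.isCoboundedUnder_ge)
    · filter_upwards [hBpos m] with n hn
      rw [integral_indicator_mul (hBm m)]
      exact setIntegral_mono_set (henergy (hf n)).integrableOn
        (ae_restrict_of_ae (hnonneg _)) hn.eventuallyLE
    · exact isBoundedUnder_of ⟨0, fun n => integral_nonneg_of_ae <|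
        hwB.mono fun x hx => mul_nonneg hx.1 (by positivity)⟩
  rw [← setIntegral_congr_set hBunion]
  exact le_of_tendsto' (tendsto_setIntegral_of_monotone₀ hBm hBmono (henergy hf₀).integrableOn) hB

end WeakLowerSemicontinuity

theorem stmt_4_general (N : ℕ) (Ω : Set (Euc N)) (hΩo : IsOpen Ω)
    (p : ℝ) (hp2 : 2 ≤ p)
    (lam Lam : ℝ) (hlam : 0 < lam) (hlL : lam ≤ Lam)
    (Ap : Euc N → ℝ)
    (hApm : MemLp Ap ⊤ (volume.restrict Ω))
    (hAp : ∀ᵐ x ∂(volume.restrict Ω), lam ≤ Ap x ∧ Ap x ≤ Lam)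
    (u : ℕ → Euc N → ℝ) (u₀ : Euc N → ℝ)
    (Du : ℕ → Euc N → Euc N) (Du₀ : Euc N → Euc N)
    (hmeas : ∀ n, AEStronglyMeasurable (u n) (volume.restrict Ω))
    (hmeas₀ : AEStronglyMeasurable u₀ (volume.restrict Ω))
    (hDu : ∀ n, MemLp (Du n) (ENNReal.ofReal p) (volume.restrict Ω))
    (hDu₀ : MemLp Du₀ (ENNReal.ofReal p) (volume.restrict Ω))
    (hae : ∀ᵐ x ∂(volume.restrict Ω), Tendsto (fun n => u n x) atTop (𝓝 (u₀ x)))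
    (hweak : ∀ g : Euc N → Euc N,
      MemLp g (ENNReal.ofReal (p / (p - 1))) (volume.restrict Ω) →
      Tendsto (fun n => ∫ x in Ω, ⟪Du n x, g x⟫) atTop (𝓝 (∫ x in Ω, ⟪Du₀ x, g x⟫))) :
    ∫ x in Ω ∩ {x | 0 < u₀ x}, Ap x * ‖Du₀ x‖ ^ p ≤
      liminf (fun n => ∫ x in Ω ∩ {x | 0 < u n x}, Ap x * ‖Du n x‖ ^ p) atTop := by
  set μ := volume.restrict Ω
  have hA : ∀ᵐ x ∂μ, 0 ≤ Ap x ∧ Ap x ≤ Lam := hAp.mono fun x hx => ⟨hlam.le.trans hx.1, hx.2⟩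
  have hrestrict (s : Set (Euc N)) (F : Euc N → ℝ) : ∫ x in Ω ∩ s, F x = ∫ x in s, F x ∂μ := by
    rw [Measure.restrict_restrict' hΩo.measurableSet, inter_comm]
  simp only [hrestrict]
  exact setIntegral_pos_mul_norm_rpow_le_liminf (.conjExponent (by linarith)) (hlam.le.trans hlL)
    hApm.1 hA (fun n => (hmeas n).aemeasurable) hmeas₀.aemeasurable hae hDu hDu₀ hweak

/-- Lower semicontinuity of the positive-phase Dirichlet energy under pointwise a.e.
convergence of `u_n` and weak `L^p` convergence of the gradients. -/
theorem stmt_4 (N : ℕ) (Ω : Set (Euc N)) (hΩo : IsOpen Ω) (hΩb : Bornology.IsBounded Ω)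
    (p : ℝ) (hp2 : 2 ≤ p) (hpN : p < N)
    (lam Lam : ℝ) (hlam : 0 < lam) (hlL : lam ≤ Lam)
    (Ap : Euc N → ℝ)
    (hApm : MemLp Ap ⊤ (volume.restrict Ω))
    (hAp : ∀ᵐ x ∂(volume.restrict Ω), lam ≤ Ap x ∧ Ap x ≤ Lam)
    (u : ℕ → Euc N → ℝ) (u₀ : Euc N → ℝ)
    (Du : ℕ → Euc N → Euc N) (Du₀ : Euc N → Euc N)
    (hmeas : ∀ n, AEStronglyMeasurable (u n) (volume.restrict Ω))
    (hmeas₀ : AEStronglyMeasurable u₀ (volume.restrict Ω))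
    (hDu : ∀ n, MemLp (Du n) (ENNReal.ofReal p) (volume.restrict Ω))
    (hDu₀ : MemLp Du₀ (ENNReal.ofReal p) (volume.restrict Ω))
    (hae : ∀ᵐ x ∂(volume.restrict Ω), Tendsto (fun n => u n x) atTop (𝓝 (u₀ x)))
    (hweak : ∀ g : Euc N → Euc N,
      MemLp g (ENNReal.ofReal (p / (p - 1))) (volume.restrict Ω) →
      Tendsto (fun n => ∫ x in Ω, ⟪Du n x, g x⟫) atTop (𝓝 (∫ x in Ω, ⟪Du₀ x, g x⟫))) :
    ∫ x in Ω ∩ {x | 0 < u₀ x}, Ap x * ‖Du₀ x‖ ^ p ≤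
      liminf (fun n => ∫ x in Ω ∩ {x | 0 < u n x}, Ap x * ‖Du n x‖ ^ p) atTop :=
  stmt_4_general N Ω hΩo p hp2 lam Lam hlam hlL Ap hApm hAp u u₀ Du Du₀ hmeas hmeas₀ hDu hDu₀ hae
    hweak

end
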